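/- arXiv:quant-ph/0408052 — 4 statements merged into one kernel-verified Lean document; each statement's English description precedes it below -/
import Mathlib

section
/- For any n ≥ 3, any deterministic strategy for game G_n gives an appropriate answer on at most 2^{n-2} + 2^{⌊n/2⌋-1} of the 2^{n-1} legitimate questions; equivalently, its success proportion is at most 1/2 + 2^{-⌈n/2⌉}. -/
open Finset

namespace DetGHZ

local notation "𝓘" => (Zsqrtd.sqrtd : GaussianInt)

def IsU (z : GaussianInt) : Prop := z = 1 ∨ z = -1 ∨ z = 𝓘 ∨ z = -𝓘

lemma IsU.mul {a b : GaussianInt} (ha : IsU a) (hb : IsU b) : IsU (a * b) := by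
  rcases ha with h|h|h|h <;> rcases hb with h'|h'|h'|h' <;> subst h <;> subst h' <;>
    simp only [IsU] <;> decide

lemma IsU_Ipow (k : ℕ) : IsU (𝓘 ^ k) := by
  induction k with
  | zero => exact Or.inl (by simp)
  | succ k ih => rw [pow_succ]; exact ih.mul (Or.inr (Or.inr (Or.inl rfl)))

def G (z : GaussianInt) : Prop := ∃ u, IsU u ∧ (z = u ∨ z = u * (1 + 𝓘))

lemma G_re {z : GaussianInt} (h : G z) : |z.re| ≤ 1 := by
  obtain ⟨u, hu, h⟩ := h
  rcases hu with h'|h'|h'|h' <;> subst h' <;> rcases h with h|h <;> subst h <;> decide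

lemma IsU.mul_G {u z : GaussianInt} (hu : IsU u) (hz : G z) : G (u * z) := by
  obtain ⟨v, hv, h⟩ := hz
  rcases h with h|h
  · exact ⟨u * v, hu.mul hv, Or.inl (by rw [h])⟩
  · exact ⟨u * v, hu.mul hv, Or.inr (by rw [h, mul_assoc])⟩

lemma prod_factor {α : Type*} (s : Finset α) (g : α → GaussianInt)
    (h : ∀ i ∈ s, ∃ u, IsU u ∧ g i = u * (1 + 𝓘)) :
    ∃ u, IsU u ∧ ∏ i ∈ s, g i = u * (1 + 𝓘) ^ s.card := by
  classical
  induction s using Finset.induction_on with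
  | empty => exact ⟨1, Or.inl rfl, by simp⟩
  | @insert a s ha ih =>
    obtain ⟨u, hu, hg⟩ := h a (mem_insert_self a s)
    obtain ⟨v, hv, hp⟩ := ih (fun i hi => h i (mem_insert_of_mem hi))
    refine ⟨u * v, hu.mul hv, ?_⟩
    rw [prod_insert ha, hg, hp, card_insert_of_notMem ha, pow_succ]
    ring

lemma pow_oneAddI (m : ℕ) :
    ∃ w, G w ∧ (1 + 𝓘) ^ m = (2 ^ (m / 2) : GaussianInt) * w := by
  have hsq : (1 + 𝓘) ^ 2 = 2 * 𝓘 := by decide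
  have h1 : (1 + 𝓘) ^ (2 * (m / 2)) = 2 ^ (m / 2) * 𝓘 ^ (m / 2) := by
    rw [pow_mul, hsq, mul_pow]
  have hm := Nat.div_add_mod m 2
  rcases Nat.mod_two_eq_zero_or_one m with h | h
  · refine ⟨𝓘 ^ (m / 2), ⟨𝓘 ^ (m / 2), IsU_Ipow _, Or.inl rfl⟩, ?_⟩
    rw [show m = 2 * (m / 2) by omega, Nat.mul_div_cancel_left _ (by norm_num), h1]
  · refine ⟨𝓘 ^ (m / 2) * (1 + 𝓘), ⟨𝓘 ^ (m / 2), IsU_Ipow _, Or.inr rfl⟩, ?_⟩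
    calc (1 + 𝓘) ^ m = (1 + 𝓘) ^ (2 * (m / 2)) * (1 + 𝓘) ^ 1 := by
          rw [← pow_add]; congr 1; omega
      _ = 2 ^ (m / 2) * (𝓘 ^ (m / 2) * (1 + 𝓘)) := by rw [h1]; ring

lemma re_sum {β : Type*} (s : Finset β) (g : β → GaussianInt) :
    (∑ x ∈ s, g x).re = ∑ x ∈ s, (g x).re := by
  induction s using Finset.cons_induction with
  | empty => simp
  | cons a s ha ih => simp [Finset.sum_cons, Zsqrtd.re_add, ih]

lemma prodIteOne {α M : Type*} [CommMonoid M] (s : Finset α) (p : α → Prop)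
    [DecidablePred p] (a : M) :
    ∏ i ∈ s, (if p i then a else 1) = a ^ (s.filter p).card := by
  rw [← Finset.prod_filter, Finset.prod_const]

lemma neg_one_pow_I_pow_re_even (a w : ℕ) (hw : Even w) :
    ((-1 : GaussianInt) ^ a * 𝓘 ^ w).re = if a % 2 = (w / 2) % 2 then 1 else -1 := by
  obtain ⟨k, hk⟩ := hw
  have hIk : 𝓘 ^ w = (-1 : GaussianInt) ^ k := by
    rw [hk, ← two_mul, pow_mul]
    norm_num [show 𝓘 ^ 2 = (-1 : GaussianInt) by decide]
  have hdiv : w / 2 = k := by omega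
  rw [hIk, ← pow_add, hdiv]
  by_cases h : a % 2 = k % 2
  · have he : Even (a + k) := by
      simp only [Nat.even_add, Nat.even_iff]; omega
    rw [he.neg_one_pow, if_pos h]; rfl
  · have he : Odd (a + k) := by
      simp only [Nat.odd_add, Nat.even_iff, Nat.odd_iff]; omega
    rw [he.neg_one_pow, if_neg h]; rfl

lemma neg_one_pow_I_pow_re_odd (a w : ℕ) (hw : ¬ Even w) :
    ((-1 : GaussianInt) ^ a * 𝓘 ^ w).re = 0 := by
  obtain ⟨k, hk⟩ := Nat.odd_iff.mpr (Nat.not_even_iff.mp hw)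
  have hIk : 𝓘 ^ w = (-1 : GaussianInt) ^ k * 𝓘 := by
    rw [hk, pow_add, pow_mul, pow_one]
    norm_num [show 𝓘 ^ 2 = (-1 : GaussianInt) by decide]
  rw [hIk, ← mul_assoc, ← pow_add]
  rcases Nat.even_or_odd (a + k) with he | he
  · rw [he.neg_one_pow]; decide
  · rw [he.neg_one_pow]; decide

def cf {n : ℕ} (f : Fin n → Bool → Bool) (i : Fin n) (b : Bool) : GaussianInt :=
  (if f i b = true then -1 else 1) * (if b = true then 𝓘 else 1)

lemma neg_one_pow_eq_ite (w : ℕ) : ((-1 : ℤ) ^ w) = if Even w then 1 else -1 := by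
  rcases Nat.even_or_odd w with h | h
  · rw [h.neg_one_pow, if_pos h]
  · rw [h.neg_one_pow, if_neg (Nat.not_even_iff_odd.mpr h)]

lemma even_card (n : ℕ) (hn : 1 ≤ n) :
    (univ.filter (fun x : Fin n → Bool =>
      Even (univ.filter (fun i => x i = true)).card)).card = 2 ^ (n - 1) := by
  have hpow : 2 ^ n = 2 * 2 ^ (n - 1) := by
    rw [← pow_succ']; congr 1; omega
  have h2 : ∀ x : Fin n → Bool,
      (∏ i, if x i = true then (-1 : ℤ) else 1)
        = if Even (univ.filter (fun i => x i = true)).card then 1 else -1 := by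
    intro x
    rw [prodIteOne, neg_one_pow_eq_ite]
  have h1 : ∑ x : Fin n → Bool,
      (if Even (univ.filter (fun i => x i = true)).card then (1 : ℤ) else -1) = 0 := by
    calc ∑ x : Fin n → Bool,
          (if Even (univ.filter (fun i => x i = true)).card then (1 : ℤ) else -1)
        = ∑ x ∈ Fintype.piFinset (fun _ : Fin n => (univ : Finset Bool)),
            ∏ i, (if x i = true then (-1 : ℤ) else 1) := by
          rw [Fintype.piFinset_univ]
          exact Finset.sum_congr rfl fun x _ => (h2 x).symm
      _ = ∏ i : Fin n, ∑ b, (if b = true then (-1 : ℤ) else 1) :=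
          (Finset.prod_univ_sum (fun _ : Fin n => (univ : Finset Bool))
            (fun _ b => if b = true then (-1 : ℤ) else 1)).symm
      _ = ∏ _i : Fin n, (0 : ℤ) := by
          apply Finset.prod_congr rfl; intro i _; rw [Fintype.sum_bool]; norm_num
      _ = 0 := by
          rw [Finset.prod_const, Finset.card_univ, Fintype.card_fin,
            zero_pow (by omega : n ≠ 0)]
  have hsplit : ∑ x : Fin n → Bool,
      (if Even (univ.filter (fun i => x i = true)).card then (1 : ℤ) else -1)
      = ((univ.filter (fun x : Fin n → Bool =>
            Even (univ.filter (fun i => x i = true)).card)).card : ℤ)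
        - ((univ.filter (fun x : Fin n → Bool =>
            ¬ Even (univ.filter (fun i => x i = true)).card)).card : ℤ) := by
    rw [Finset.sum_ite, Finset.sum_const, Finset.sum_const]
    push_cast
    ring
  have hcards := Finset.card_filter_add_card_filter_not
    (s := (univ : Finset (Fin n → Bool)))
    (p := fun x : Fin n → Bool => Even (univ.filter (fun i => x i = true)).card)
  have huniv : (univ : Finset (Fin n → Bool)).card = 2 ^ n := by
    simp [Finset.card_univ]
  rw [h1] at hsplit
  obtain ⟨E, O, hE, hO⟩ : ∃ E O, E = (univ.filter (fun x : Fin n → Bool =>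
        Even (univ.filter (fun i => x i = true)).card)).card ∧
      O = (univ.filter (fun x : Fin n → Bool =>
        ¬ Even (univ.filter (fun i => x i = true)).card)).card := ⟨_, _, rfl, rfl⟩
  rw [← hE, ← hO] at hsplit
  rw [← hE, ← hO, huniv] at hcards
  rw [← hE]
  clear h1 h2 hE hO
  omega


lemma count_bound (n : ℕ) (hn : 3 ≤ n) (f : Fin n → Bool → Bool) :
    2 * ((univ.filter (fun x : Fin n → Bool =>
        Even (univ.filter (fun i => x i = true)).card ∧
        (univ.filter (fun i => f i (x i) = true)).card % 2 =
          ((univ.filter (fun i => x i = true)).card / 2) % 2)).card : ℤ)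
      ≤ 2 ^ (n - 1) + 2 ^ (n / 2) := by
  -- factor structure of the product
  have hfac : ∀ i ∈ (univ : Finset (Fin n)), ∃ u, IsU u ∧ (∑ b, cf f i b) = u * (1 + 𝓘) := by
    intro i _
    rw [Fintype.sum_bool]
    cases hft : f i true <;> cases hff : f i false <;>
      simp only [cf, hft, hff] <;>
      first
        | exact ⟨1, Or.inl rfl, by decide⟩
        | exact ⟨-1, Or.inr (Or.inl rfl), by decide⟩
        | exact ⟨𝓘, Or.inr (Or.inr (Or.inl rfl)), by decide⟩
        | exact ⟨-𝓘, Or.inr (Or.inr (Or.inr rfl)), by decide⟩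
  obtain ⟨u, hu, hPu⟩ := prod_factor univ (fun i => ∑ b, cf f i b) hfac
  obtain ⟨w, hw, hpw⟩ := pow_oneAddI n
  have hcard : (univ : Finset (Fin n)).card = n := by simp
  rw [hcard] at hPu
  -- bound on the real part
  have hPre : |(∏ i, ∑ b, cf f i b).re| ≤ 2 ^ (n / 2) := by
    have heq : u * ((2 ^ (n / 2) : GaussianInt) * w)
        = ((2 ^ (n / 2) : ℤ) : GaussianInt) * (u * w) := by push_cast; ring
    rw [hPu, hpw, heq, Zsqrtd.re_smul, abs_mul, abs_of_nonneg
      (by positivity : (0:ℤ) ≤ 2 ^ (n / 2))]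
    calc (2:ℤ) ^ (n / 2) * |(u * w).re| ≤ 2 ^ (n / 2) * 1 := by
          have := G_re (hu.mul_G hw)
          have h2 : (0:ℤ) ≤ 2 ^ (n / 2) := by positivity
          nlinarith
      _ = 2 ^ (n / 2) := mul_one _
  -- expand as a sum
  have hsum : (∏ i, ∑ b, cf f i b) = ∑ x : Fin n → Bool, ∏ i, cf f i (x i) := by
    rw [Finset.prod_univ_sum (fun _ : Fin n => (univ : Finset Bool)) (cf f),
      Fintype.piFinset_univ]
  have hterm : ∀ x : Fin n → Bool, (∏ i, cf f i (x i)).re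
      = (if Even (univ.filter (fun i => x i = true)).card then
          (if (univ.filter (fun i => f i (x i) = true)).card % 2 =
              ((univ.filter (fun i => x i = true)).card / 2) % 2
            then (1:ℤ) else -1) else 0) := by
    intro x
    have hx : ∏ i, cf f i (x i)
        = (-1) ^ (univ.filter (fun i => f i (x i) = true)).card
          * 𝓘 ^ (univ.filter (fun i => x i = true)).card := by
      calc ∏ i, cf f i (x i)
          = (∏ i, if f i (x i) = true then (-1 : GaussianInt) else 1)
            * ∏ i, (if x i = true then 𝓘 else 1) := by
            rw [← Finset.prod_mul_distrib]; rfl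
        _ = _ := by rw [prodIteOne, prodIteOne]
    rw [hx]
    by_cases hwx : Even (univ.filter (fun i => x i = true)).card
    · rw [neg_one_pow_I_pow_re_even _ _ hwx, if_pos hwx]
    · rw [neg_one_pow_I_pow_re_odd _ _ hwx, if_neg hwx]
  have hre : (∏ i, ∑ b, cf f i b).re
      = ∑ x ∈ univ.filter (fun x : Fin n → Bool =>
            Even (univ.filter (fun i => x i = true)).card),
          (if (univ.filter (fun i => f i (x i) = true)).card % 2 =
              ((univ.filter (fun i => x i = true)).card / 2) % 2
            then (1:ℤ) else -1) := by
    rw [hsum, re_sum, Finset.sum_filter]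
    exact Finset.sum_congr rfl fun x _ => hterm x
  have hsplit : (∏ i, ∑ b, cf f i b).re
      = (((univ.filter (fun x : Fin n → Bool =>
            Even (univ.filter (fun i => x i = true)).card)).filter
            (fun x => (univ.filter (fun i => f i (x i) = true)).card % 2 =
              ((univ.filter (fun i => x i = true)).card / 2) % 2)).card : ℤ)
        - (((univ.filter (fun x : Fin n → Bool =>
            Even (univ.filter (fun i => x i = true)).card)).filter
            (fun x => ¬ ((univ.filter (fun i => f i (x i) = true)).card % 2 =
              ((univ.filter (fun i => x i = true)).card / 2) % 2))).card : ℤ) := by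
    rw [hre, Finset.sum_ite, Finset.sum_const, Finset.sum_const]
    push_cast
    ring
  have hcards := Finset.card_filter_add_card_filter_not
    (s := univ.filter (fun x : Fin n → Bool =>
            Even (univ.filter (fun i => x i = true)).card))
    (p := fun x => (univ.filter (fun i => f i (x i) = true)).card % 2 =
              ((univ.filter (fun i => x i = true)).card / 2) % 2)
  have hL := even_card n (le_trans (by norm_num) hn)
  rw [hL] at hcards
  have hff : (univ.filter (fun x : Fin n → Bool =>
        Even (univ.filter (fun i => x i = true)).card ∧
        (univ.filter (fun i => f i (x i) = true)).card % 2 =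
          ((univ.filter (fun i => x i = true)).card / 2) % 2))
      = ((univ.filter (fun x : Fin n → Bool =>
            Even (univ.filter (fun i => x i = true)).card)).filter
            (fun x => (univ.filter (fun i => f i (x i) = true)).card % 2 =
              ((univ.filter (fun i => x i = true)).card / 2) % 2)) := by
    rw [Finset.filter_filter]
  rw [hff]
  obtain ⟨Sc, Oc, R, hSc, hOc, hR⟩ : ∃ Sc Oc R,
      Sc = ((univ.filter (fun x : Fin n → Bool =>
            Even (univ.filter (fun i => x i = true)).card)).filter
            (fun x => (univ.filter (fun i => f i (x i) = true)).card % 2 =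
              ((univ.filter (fun i => x i = true)).card / 2) % 2)).card ∧
      Oc = ((univ.filter (fun x : Fin n → Bool =>
            Even (univ.filter (fun i => x i = true)).card)).filter
            (fun x => ¬ ((univ.filter (fun i => f i (x i) = true)).card % 2 =
              ((univ.filter (fun i => x i = true)).card / 2) % 2))).card ∧
      R = (∏ i, ∑ b, cf f i b).re := ⟨_, _, _, rfl, rfl, rfl⟩
  rw [← hSc, ← hOc] at hcards hsplit
  rw [← hR] at hsplit hPre
  rw [← hSc]
  have hRle : R ≤ 2 ^ (n / 2) := le_of_abs_le hPre
  have h1 : (Sc : ℤ) + Oc = 2 ^ (n - 1) := by exact_mod_cast hcards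
  linarith

end DetGHZ

theorem deterministic_success_proportion_bound (n : ℕ) (hn : 3 ≤ n)
    (f : Fin n → Bool → Bool) :
    (Finset.univ.filter (fun x : Fin n → Bool =>
        Even (Finset.univ.filter (fun i => x i = true)).card ∧
        (Finset.univ.filter (fun i => f i (x i) = true)).card % 2 =
          ((Finset.univ.filter (fun i => x i = true)).card / 2) % 2)).card
      ≤ 2 ^ (n - 2) + 2 ^ (n / 2 - 1) ∧
    ((Finset.univ.filter (fun x : Fin n → Bool =>
        Even (Finset.univ.filter (fun i => x i = true)).card ∧
        (Finset.univ.filter (fun i => f i (x i) = true)).card % 2 =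
          ((Finset.univ.filter (fun i => x i = true)).card / 2) % 2)).card : ℚ)
        / 2 ^ (n - 1)
      ≤ 1 / 2 + (2 : ℚ) ^ (-(((n + 1) / 2 : ℕ) : ℤ)) := by
  have e1 : (2:ℤ) ^ (n - 1) = 2 * 2 ^ (n - 2) := by
    rw [← pow_succ']; congr 1; omega
  have e2 : (2:ℤ) ^ (n / 2) = 2 * 2 ^ (n / 2 - 1) := by
    rw [← pow_succ']; congr 1; omega
  have e3 : n - 1 = (n - 2) + 1 := by omega
  have e4 : (-(((n + 1) / 2 : ℕ) : ℤ) + ((n - 1 : ℕ) : ℤ)) = ((n / 2 - 1 : ℕ) : ℤ) := by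
    omega
  have key := DetGHZ.count_bound n hn f
  obtain ⟨S, hS⟩ : ∃ S, S = (Finset.univ.filter (fun x : Fin n → Bool =>
        Even (Finset.univ.filter (fun i => x i = true)).card ∧
        (Finset.univ.filter (fun i => f i (x i) = true)).card % 2 =
          ((Finset.univ.filter (fun i => x i = true)).card / 2) % 2)).card := ⟨_, rfl⟩
  rw [← hS] at key ⊢
  have h1 : S ≤ 2 ^ (n - 2) + 2 ^ (n / 2 - 1) := by
    have hz : (S : ℤ) ≤ 2 ^ (n - 2) + 2 ^ (n / 2 - 1) := by linarith
    exact_mod_cast hz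
  refine ⟨h1, ?_⟩
  rw [div_le_iff₀ (by positivity : (0:ℚ) < 2 ^ (n - 1))]
  have ha : (1 / 2 : ℚ) * 2 ^ (n - 1) = 2 ^ (n - 2) := by
    rw [e3, pow_succ]; ring
  have hb : (2 : ℚ) ^ (-(((n + 1) / 2 : ℕ) : ℤ)) * 2 ^ (n - 1) = 2 ^ (n / 2 - 1) := by
    rw [show ((2:ℚ) ^ (n - 1)) = (2:ℚ) ^ ((n - 1 : ℕ) : ℤ) from (zpow_natCast 2 (n - 1)).symm,
      ← zpow_add₀ (by norm_num : (2:ℚ) ≠ 0),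
      e4]
    exact zpow_natCast 2 (n / 2 - 1)
  calc (S : ℚ) ≤ ((2 ^ (n - 2) + 2 ^ (n / 2 - 1) : ℕ) : ℚ) := by exact_mod_cast h1
    _ = (2:ℚ) ^ (n - 2) + 2 ^ (n / 2 - 1) := by push_cast; ring
    _ = (1 / 2 + (2 : ℚ) ^ (-(((n + 1) / 2 : ℕ) : ℤ))) * 2 ^ (n - 1) := by
        rw [add_mul, ha, hb]
end

section
/- For every n ≥ 3, there exists a deterministic strategy for game G_n whose success proportion is exactly 1/2 + 2^{-⌈n/2⌉}. In particular, if n ≡ 2 (mod 8) the strategy where player 1 outputs his input bit x_1 and all other players output 0 achieves this proportion. -/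
open Finset
def wtA {m : ℕ} (x : Fin m → Bool) : ℕ := (univ.filter (fun i => x i = true)).card
def BB (r m : ℕ) : ℕ := (univ.filter (fun x : Fin m → Bool => wtA x % 4 = r)).card
lemma wtA_cons {m : ℕ} (b : Bool) (y : Fin m → Bool) :
    wtA (Fin.cons b y) = (if b then 1 else 0) + wtA y := by
  simp only [wtA, card_filter]
  rw [Fin.sum_univ_succ]
  simp
lemma splitA {m : ℕ} (p : Bool → ℕ → Prop) [∀ b k, Decidable (p b k)] :
    (univ.filter (fun x : Fin (m+1) → Bool => p (x 0) (wtA x))).card =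
      (univ.filter (fun y : Fin m → Bool => p false (wtA y))).card +
      (univ.filter (fun y : Fin m → Bool => p true (1 + wtA y))).card := by
  simp only [card_filter]
  rw [← Equiv.sum_comp (Fin.consEquiv (fun _ : Fin (m+1) => Bool))
      (fun x => if p (x 0) (wtA x) then 1 else 0)]
  rw [Fintype.sum_prod_type]
  rw [Fintype.sum_bool]
  simp [Fin.consEquiv, wtA_cons, add_comm]

lemma BB_rec (r r' m : ℕ) (hr : ∀ w, (1 + w) % 4 = r ↔ w % 4 = r') :
    BB r (m+1) = BB r m + BB r' m := by
  have := splitA (m := m) (fun _ w => w % 4 = r)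
  rw [show (BB r (m+1)) = (univ.filter (fun x : Fin (m+1) → Bool => wtA x % 4 = r)).card from rfl,
      this]
  congr 1
  unfold BB
  congr 1
  apply filter_congr
  intro y _
  simp [hr]

def uvA : ℕ → ℤ × ℤ
  | 0 => (1, 0)
  | m+1 => ((uvA m).1 - (uvA m).2, (uvA m).1 + (uvA m).2)

lemma uvA_add8 (m : ℕ) : uvA (m+8) = (16 * (uvA m).1, 16 * (uvA m).2) := by
  show uvA (m+1+1+1+1+1+1+1+1) = _
  simp only [uvA, Prod.mk.injEq]
  constructor <;> ring

lemma uvA_closed (q r : ℕ) : uvA (8*q + r) = (16^q * (uvA r).1, 16^q * (uvA r).2) := by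
  induction q with
  | zero => simp
  | succ q ih =>
    have : 8*(q+1) + r = (8*q + r) + 8 := by ring
    rw [this, uvA_add8, ih]
    simp only [Prod.mk.injEq]
    constructor <;> ring

lemma BB0_zero : BB 0 0 = 1 := by decide
lemma BB1_zero : BB 1 0 = 0 := by decide
lemma BB2_zero : BB 2 0 = 0 := by decide
lemma BB3_zero : BB 3 0 = 0 := by decide

lemma masterA (m : ℕ) :
    ((BB 0 m : ℤ) - BB 2 m = (uvA m).1) ∧ ((BB 1 m : ℤ) - BB 3 m = (uvA m).2) ∧
      ((BB 0 m : ℤ) + BB 1 m + BB 2 m + BB 3 m = 2^m) := by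
  induction m with
  | zero => refine ⟨?_, ?_, ?_⟩ <;> simp [BB0_zero, BB1_zero, BB2_zero, BB3_zero, uvA]
  | succ m ih =>
    obtain ⟨h1, h2, h3⟩ := ih
    have r0 : BB 0 (m+1) = BB 0 m + BB 3 m := BB_rec 0 3 m (by omega)
    have r1 : BB 1 (m+1) = BB 1 m + BB 0 m := BB_rec 1 0 m (by omega)
    have r2 : BB 2 (m+1) = BB 2 m + BB 1 m := BB_rec 2 1 m (by omega)
    have r3 : BB 3 (m+1) = BB 3 m + BB 2 m := BB_rec 3 2 m (by omega)
    rw [r0, r1, r2, r3]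
    simp only [uvA]
    push_cast
    refine ⟨by linarith, by linarith, by rw [pow_succ]; linarith⟩

lemma twoB0 (m : ℕ) : 2 * (BB 0 (m+1) : ℤ) = 2^m + (uvA (m+1)).1 := by
  obtain ⟨h1, h2, h3⟩ := masterA m
  obtain ⟨g1, g2, g3⟩ := masterA (m+1)
  have r0 : BB 0 (m+1) = BB 0 m + BB 3 m := BB_rec 0 3 m (by omega)
  have r2 : BB 2 (m+1) = BB 2 m + BB 1 m := BB_rec 2 1 m (by omega)
  have hsum : (BB 0 (m+1) : ℤ) + BB 2 (m+1) = 2^m := by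
    rw [r0, r2]; push_cast; linarith
  linarith

lemma twoB2 (m : ℕ) : 2 * (BB 2 (m+1) : ℤ) = 2^m - (uvA (m+1)).1 := by
  obtain ⟨h1, h2, h3⟩ := masterA m
  obtain ⟨g1, g2, g3⟩ := masterA (m+1)
  have r0 : BB 0 (m+1) = BB 0 m + BB 3 m := BB_rec 0 3 m (by omega)
  have r2 : BB 2 (m+1) = BB 2 m + BB 1 m := BB_rec 2 1 m (by omega)
  have hsum : (BB 0 (m+1) : ℤ) + BB 2 (m+1) = 2^m := by
    rw [r0, r2]; push_cast; linarith
  linarith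

lemma twoB01 (m : ℕ) : 2 * ((BB 0 m : ℤ) + BB 1 m) = 2^m + (uvA m).1 + (uvA m).2 := by
  obtain ⟨h1, h2, h3⟩ := masterA m
  linarith

lemma twoB23 (m : ℕ) : 2 * ((BB 2 m : ℤ) + BB 3 m) = 2^m - (uvA m).1 - (uvA m).2 := by
  obtain ⟨h1, h2, h3⟩ := masterA m
  linarith

lemma qhelp (T n e : ℕ) (h1 : 1 ≤ n) (he : e ≤ n)
    (hT : 2 * (T : ℚ) = 2 ^ (n-1) + 2 ^ (n-e)) :
    (T : ℚ) / 2 ^ (n-1) = 1 / 2 + (2 : ℚ) ^ (-(e : ℤ)) := by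
  have h2 : (2:ℚ) ^ (n-1) ≠ 0 := by positivity
  rw [div_eq_iff h2]
  rw [← zpow_natCast (2:ℚ) (n-1), ← zpow_natCast (2:ℚ) (n-e)] at *
  rw [show ((n-1 : ℕ) : ℤ) = (n:ℤ) - 1 from by omega,
      show ((n-e : ℕ) : ℤ) = (n:ℤ) - e from by omega] at *
  have h3 : (2:ℚ) ^ ((n:ℤ) - e) = (2:ℚ) ^ (-(e:ℤ)) * (2:ℚ) ^ ((n:ℤ)-1) * 2 := by
    rw [show ((n:ℤ) - e) = (-(e:ℤ)) + ((n:ℤ)-1) + 1 from by ring, zpow_add₀ (two_ne_zero),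
        zpow_add₀ (two_ne_zero), zpow_one]
  linear_combination hT / 2 + h3 / 2

lemma cardId {m : ℕ} (x : Fin (m+1) → Bool) :
    (univ.filter (fun i : Fin (m+1) => (if (i:ℕ) = 0 then x i else false) = true)).card =
      if x 0 = true then 1 else 0 := by
  rw [card_filter, Fin.sum_univ_succ]
  simp [Fin.val_succ]

lemma cardNeg {m : ℕ} (x : Fin (m+1) → Bool) :
    (univ.filter (fun i : Fin (m+1) => (if (i:ℕ) = 0 then !(x i) else false) = true)).card =
      if x 0 = true then 0 else 1 := by
  rw [card_filter, Fin.sum_univ_succ]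
  cases h : x 0 <;> simp [Fin.val_succ, h]

lemma cardOne {m : ℕ} :
    (univ.filter (fun i : Fin (m+1) => (decide ((i:ℕ) = 0)) = true)).card = 1 := by
  rw [card_filter, Fin.sum_univ_succ]
  simp [Fin.val_succ]

lemma count_B0 (n : ℕ) :
    (univ.filter (fun x : Fin n → Bool =>
        Even (univ.filter (fun i => x i = true)).card ∧
        (univ.filter (fun i : Fin n => (false : Bool) = true)).card % 2 =
          ((univ.filter (fun i => x i = true)).card / 2) % 2)).card = BB 0 n := by
  unfold BB wtA
  congr 1
  apply filter_congr
  intro x _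
  simp only [Nat.even_iff]
  simp
  omega

lemma count_B2 (m : ℕ) :
    (univ.filter (fun x : Fin (m+1) → Bool =>
        Even (univ.filter (fun i => x i = true)).card ∧
        (univ.filter (fun i : Fin (m+1) => (decide ((i:ℕ) = 0)) = true)).card % 2 =
          ((univ.filter (fun i => x i = true)).card / 2) % 2)).card = BB 2 (m+1) := by
  unfold BB wtA
  congr 1
  apply filter_congr
  intro x _
  rw [cardOne]
  simp only [Nat.even_iff]
  omega

lemma key0A : ∀ w : ℕ, (Even w ∧ 0 % 2 = w / 2 % 2 ↔ w % 4 = 0) := fun w => by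
  rw [Nat.even_iff]; omega
lemma key1A : ∀ w : ℕ, (Even (1 + w) ∧ 1 % 2 = (1 + w) / 2 % 2 ↔ w % 4 = 1) := fun w => by
  rw [Nat.even_iff]; omega
lemma key2A : ∀ w : ℕ, (Even w ∧ 1 % 2 = w / 2 % 2 ↔ w % 4 = 2) := fun w => by
  rw [Nat.even_iff]; omega
lemma key3A : ∀ w : ℕ, (Even (1 + w) ∧ 0 % 2 = (1 + w) / 2 % 2 ↔ w % 4 = 3) := fun w => by
  rw [Nat.even_iff]; omega

lemma count_id (m : ℕ) :
    (univ.filter (fun x : Fin (m+1) → Bool =>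
        Even (univ.filter (fun i => x i = true)).card ∧
        (univ.filter (fun i : Fin (m+1) =>
            (if (i:ℕ) = 0 then x i else false) = true)).card % 2 =
          ((univ.filter (fun i => x i = true)).card / 2) % 2)).card = BB 0 m + BB 1 m := by
  have step1 : (univ.filter (fun x : Fin (m+1) → Bool =>
        Even (univ.filter (fun i => x i = true)).card ∧
        (univ.filter (fun i : Fin (m+1) =>
            (if (i:ℕ) = 0 then x i else false) = true)).card % 2 =
          ((univ.filter (fun i => x i = true)).card / 2) % 2)).card =
      (univ.filter (fun x : Fin (m+1) → Bool =>
        (fun b w => Even w ∧ (if b = true then 1 else 0) % 2 = (w / 2) % 2) (x 0) (wtA x))).card := by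
    congr 1
    apply filter_congr
    intro x _
    rw [cardId]
    exact Iff.rfl
  rw [step1, splitA (m := m) (fun b w => Even w ∧ (if b = true then 1 else 0) % 2 = (w / 2) % 2)]
  congr 1
  · unfold BB
    congr 1
    apply filter_congr
    intro y _
    exact key0A (wtA y)
  · unfold BB
    congr 1
    apply filter_congr
    intro y _
    exact key1A (wtA y)

lemma count_neg (m : ℕ) :
    (univ.filter (fun x : Fin (m+1) → Bool =>
        Even (univ.filter (fun i => x i = true)).card ∧
        (univ.filter (fun i : Fin (m+1) =>
            (if (i:ℕ) = 0 then !(x i) else false) = true)).card % 2 =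
          ((univ.filter (fun i => x i = true)).card / 2) % 2)).card = BB 2 m + BB 3 m := by
  have step1 : (univ.filter (fun x : Fin (m+1) → Bool =>
        Even (univ.filter (fun i => x i = true)).card ∧
        (univ.filter (fun i : Fin (m+1) =>
            (if (i:ℕ) = 0 then !(x i) else false) = true)).card % 2 =
          ((univ.filter (fun i => x i = true)).card / 2) % 2)).card =
      (univ.filter (fun x : Fin (m+1) → Bool =>
        (fun b w => Even w ∧ (if b = true then 0 else 1) % 2 = (w / 2) % 2) (x 0) (wtA x))).card := by
    congr 1
    apply filter_congr
    intro x _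
    rw [cardNeg]
    exact Iff.rfl
  rw [step1, splitA (m := m) (fun b w => Even w ∧ (if b = true then 0 else 1) % 2 = (w / 2) % 2)]
  congr 1
  · unfold BB
    congr 1
    apply filter_congr
    intro y _
    exact key2A (wtA y)
  · unfold BB
    congr 1
    apply filter_congr
    intro y _
    exact key3A (wtA y)

lemma pow16 (q j : ℕ) : (2:ℤ)^j * 16^q = 2^(4*q+j) := by
  rw [show (16:ℤ) = 2^4 from by norm_num, ← pow_mul, ← pow_add, Nat.add_comm]

lemma finisher (T m k : ℕ) (hk : m + 1 - (m+1+1)/2 = k) (hk2 : (m+1+1)/2 ≤ m+1)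
    (hTZ : 2*(T:ℤ) = 2^m + 2^k) :
    (T:ℚ)/2^(m+1-1) = 1/2 + (2:ℚ)^(-(((m+1+1)/2 : ℕ) : ℤ)) := by
  refine qhelp T (m+1) ((m+1+1)/2) (by omega) hk2 ?_
  rw [show m+1-1 = m from by omega, hk]
  exact_mod_cast hTZ

lemma part2A (m : ℕ) (h : (m+1) % 8 = 2) :
    ((Finset.univ.filter (fun x : Fin (m+1) → Bool =>
        Even (Finset.univ.filter (fun i => x i = true)).card ∧
        (Finset.univ.filter (fun i : Fin (m+1) =>
            (if (i : ℕ) = 0 then x i else false) = true)).card % 2 =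
          ((Finset.univ.filter (fun i => x i = true)).card / 2) % 2)).card : ℚ)
        / 2 ^ (m + 1 - 1)
      = 1 / 2 + (2 : ℚ) ^ (-(((m + 1 + 1) / 2 : ℕ) : ℤ)) := by
  obtain ⟨q, hq⟩ : ∃ q, m + 1 = 8*q + 2 := ⟨(m+1)/8, by omega⟩
  rw [count_id m]
  have huv : uvA m = (16^q * (uvA 1).1, 16^q * (uvA 1).2) := by
    rw [show m = 8*q+1 from by omega]; exact uvA_closed q 1
  have hTZ : 2 * ((BB 0 m + BB 1 m : ℕ) : ℤ) = 2^m + 2^(4*q+1) := by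
    have h2 := twoB01 m
    rw [huv] at h2
    rw [show (uvA 1).1 = 1 from by decide, show (uvA 1).2 = 1 from by decide] at h2
    simp only [Prod.fst, Prod.snd, mul_one] at h2
    push_cast
    rw [show (2:ℤ)^(4*q+1) = 16^q * 2 from by
      rw [pow_add, show (16:ℤ)=2^4 from by norm_num, ← pow_mul]; norm_num]
    linarith
  exact finisher (BB 0 m + BB 1 m) m (4*q+1) (by omega) (by omega) hTZ

theorem optimal_deterministic_strategy_exists (n : ℕ) (hn : 3 ≤ n) :
    (∃ f : Fin n → Bool → Bool,
      ((Finset.univ.filter (fun x : Fin n → Bool =>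
          Even (Finset.univ.filter (fun i => x i = true)).card ∧
          (Finset.univ.filter (fun i => f i (x i) = true)).card % 2 =
            ((Finset.univ.filter (fun i => x i = true)).card / 2) % 2)).card : ℚ)
          / 2 ^ (n - 1)
        = 1 / 2 + (2 : ℚ) ^ (-(((n + 1) / 2 : ℕ) : ℤ))) ∧
    (n % 8 = 2 →
      ((Finset.univ.filter (fun x : Fin n → Bool =>
          Even (Finset.univ.filter (fun i => x i = true)).card ∧
          (Finset.univ.filter (fun i : Fin n =>
              (if (i : ℕ) = 0 then x i else false) = true)).card % 2 =
            ((Finset.univ.filter (fun i => x i = true)).card / 2) % 2)).card : ℚ)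
          / 2 ^ (n - 1)
        = 1 / 2 + (2 : ℚ) ^ (-(((n + 1) / 2 : ℕ) : ℤ))) := by
  obtain ⟨m, rfl⟩ : ∃ m, n = m + 1 := ⟨n - 1, by omega⟩
  constructor
  · rcases (show (m+1)%8 = 0 ∨ (m+1)%8 = 1 ∨ (m+1)%8 = 2 ∨ (m+1)%8 = 3 ∨ (m+1)%8 = 4 ∨
        (m+1)%8 = 5 ∨ (m+1)%8 = 6 ∨ (m+1)%8 = 7 from by omega) with h|h|h|h|h|h|h|h
    -- case 0
    · obtain ⟨q, hq⟩ : ∃ q, m + 1 = 8*q := ⟨(m+1)/8, by omega⟩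
      refine ⟨fun _ _ => false, ?_⟩
      rw [count_B0 (m+1)]
      have huv : uvA (m+1) = (16^q * (uvA 0).1, 16^q * (uvA 0).2) := by
        rw [show m+1 = 8*q+0 from by omega]; exact uvA_closed q 0
      have hTZ : 2 * (BB 0 (m+1) : ℤ) = 2^m + 2^(4*q) := by
        have h2 := twoB0 m
        rw [huv, show (uvA 0).1 = 1 from by decide] at h2
        simp only [Prod.fst, mul_one] at h2
        rw [show (2:ℤ)^(4*q) = 16^q from by
          rw [show (16:ℤ)=2^4 from by norm_num, ← pow_mul]]
        linarith
      exact finisher (BB 0 (m+1)) m (4*q) (by omega) (by omega) hTZ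
    -- case 1
    · obtain ⟨q, hq⟩ : ∃ q, m + 1 = 8*q + 1 := ⟨(m+1)/8, by omega⟩
      refine ⟨fun _ _ => false, ?_⟩
      rw [count_B0 (m+1)]
      have huv : uvA (m+1) = (16^q * (uvA 1).1, 16^q * (uvA 1).2) := by
        rw [show m+1 = 8*q+1 from by omega]; exact uvA_closed q 1
      have hTZ : 2 * (BB 0 (m+1) : ℤ) = 2^m + 2^(4*q) := by
        have h2 := twoB0 m
        rw [huv, show (uvA 1).1 = 1 from by decide] at h2
        simp only [Prod.fst, mul_one] at h2
        rw [show (2:ℤ)^(4*q) = 16^q from by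
          rw [show (16:ℤ)=2^4 from by norm_num, ← pow_mul]]
        linarith
      exact finisher (BB 0 (m+1)) m (4*q) (by omega) (by omega) hTZ
    -- case 2
    · exact ⟨fun i b => if (i : ℕ) = 0 then b else false, part2A m h⟩
    -- case 3
    · obtain ⟨q, hq⟩ : ∃ q, m + 1 = 8*q + 3 := ⟨(m+1)/8, by omega⟩
      refine ⟨fun i _ => decide ((i : ℕ) = 0), ?_⟩
      rw [count_B2 m]
      have huv : uvA (m+1) = (16^q * (uvA 3).1, 16^q * (uvA 3).2) := by
        rw [show m+1 = 8*q+3 from by omega]; exact uvA_closed q 3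
      have hTZ : 2 * (BB 2 (m+1) : ℤ) = 2^m + 2^(4*q+1) := by
        have h2 := twoB2 m
        rw [huv, show (uvA 3).1 = -2 from by decide] at h2
        simp only [Prod.fst] at h2
        rw [show (2:ℤ)^(4*q+1) = 16^q * 2 from by
          rw [pow_add, show (16:ℤ)=2^4 from by norm_num, ← pow_mul]; norm_num]
        linarith
      exact finisher (BB 2 (m+1)) m (4*q+1) (by omega) (by omega) hTZ
    -- case 4
    · obtain ⟨q, hq⟩ : ∃ q, m + 1 = 8*q + 4 := ⟨(m+1)/8, by omega⟩
      refine ⟨fun i _ => decide ((i : ℕ) = 0), ?_⟩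
      rw [count_B2 m]
      have huv : uvA (m+1) = (16^q * (uvA 4).1, 16^q * (uvA 4).2) := by
        rw [show m+1 = 8*q+4 from by omega]; exact uvA_closed q 4
      have hTZ : 2 * (BB 2 (m+1) : ℤ) = 2^m + 2^(4*q+2) := by
        have h2 := twoB2 m
        rw [huv, show (uvA 4).1 = -4 from by decide] at h2
        simp only [Prod.fst] at h2
        rw [show (2:ℤ)^(4*q+2) = 16^q * 4 from by
          rw [pow_add, show (16:ℤ)=2^4 from by norm_num, ← pow_mul]; norm_num]
        linarith
      exact finisher (BB 2 (m+1)) m (4*q+2) (by omega) (by omega) hTZ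
    -- case 5
    · obtain ⟨q, hq⟩ : ∃ q, m + 1 = 8*q + 5 := ⟨(m+1)/8, by omega⟩
      refine ⟨fun i _ => decide ((i : ℕ) = 0), ?_⟩
      rw [count_B2 m]
      have huv : uvA (m+1) = (16^q * (uvA 5).1, 16^q * (uvA 5).2) := by
        rw [show m+1 = 8*q+5 from by omega]; exact uvA_closed q 5
      have hTZ : 2 * (BB 2 (m+1) : ℤ) = 2^m + 2^(4*q+2) := by
        have h2 := twoB2 m
        rw [huv, show (uvA 5).1 = -4 from by decide] at h2
        simp only [Prod.fst] at h2
        rw [show (2:ℤ)^(4*q+2) = 16^q * 4 from by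
          rw [pow_add, show (16:ℤ)=2^4 from by norm_num, ← pow_mul]; norm_num]
        linarith
      exact finisher (BB 2 (m+1)) m (4*q+2) (by omega) (by omega) hTZ
    -- case 6
    · obtain ⟨q, hq⟩ : ∃ q, m + 1 = 8*q + 6 := ⟨(m+1)/8, by omega⟩
      refine ⟨fun i b => if (i : ℕ) = 0 then !b else false, ?_⟩
      rw [count_neg m]
      have huv : uvA m = (16^q * (uvA 5).1, 16^q * (uvA 5).2) := by
        rw [show m = 8*q+5 from by omega]; exact uvA_closed q 5
      have hTZ : 2 * ((BB 2 m + BB 3 m : ℕ) : ℤ) = 2^m + 2^(4*q+3) := by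
        have h2 := twoB23 m
        rw [huv, show (uvA 5).1 = -4 from by decide, show (uvA 5).2 = -4 from by decide] at h2
        simp only [Prod.fst, Prod.snd] at h2
        push_cast
        rw [show (2:ℤ)^(4*q+3) = 16^q * 8 from by
          rw [pow_add, show (16:ℤ)=2^4 from by norm_num, ← pow_mul]; norm_num]
        linarith
      exact finisher (BB 2 m + BB 3 m) m (4*q+3) (by omega) (by omega) hTZ
    -- case 7
    · obtain ⟨q, hq⟩ : ∃ q, m + 1 = 8*q + 7 := ⟨(m+1)/8, by omega⟩
      refine ⟨fun _ _ => false, ?_⟩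
      rw [count_B0 (m+1)]
      have huv : uvA (m+1) = (16^q * (uvA 7).1, 16^q * (uvA 7).2) := by
        rw [show m+1 = 8*q+7 from by omega]; exact uvA_closed q 7
      have hTZ : 2 * (BB 0 (m+1) : ℤ) = 2^m + 2^(4*q+3) := by
        have h2 := twoB0 m
        rw [huv, show (uvA 7).1 = 8 from by decide] at h2
        simp only [Prod.fst] at h2
        rw [show (2:ℤ)^(4*q+3) = 16^q * 8 from by
          rw [pow_add, show (16:ℤ)=2^4 from by norm_num, ← pow_mul]; norm_num]
        linarith
      exact finisher (BB 0 (m+1)) m (4*q+3) (by omega) (by omega) hTZ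
  · intro h
    exact part2A m h
end

section
/- The set of all optimal deterministic strategies for G_n is balanced: for any two legitimate questions x and x', the number of optimal deterministic strategies answering appropriately on x equals the number answering appropriately on x'. -/
open Finset

/-- The sign of an output bit: `false ↦ 1`, `true ↦ -1`. -/
noncomputable def sgn (b : Bool) : ℂ := if b then -1 else 1

namespace OptBal

def opA (h : Bool → Bool) : Bool → Bool := fun b => cond b (!(h false)) (h true)
def opB (h : Bool → Bool) : Bool → Bool := fun b => cond b (h false) (!(h true))

lemma opB_opA (h : Bool → Bool) : opB (opA h) = h := by
  funext b; cases b <;> simp [opA, opB]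

lemma sgn_not (b : Bool) : sgn (!b) = -sgn b := by cases b <;> simp [sgn]

lemma sgnA_true (h : Bool → Bool) : sgn (opA h true) = -sgn (h false) := sgn_not _
lemma sgnA_false (h : Bool → Bool) : sgn (opA h false) = sgn (h true) := rfl
lemma sgnB_true (h : Bool → Bool) : sgn (opB h true) = sgn (h false) := rfl
lemma sgnB_false (h : Bool → Bool) : sgn (opB h false) = -sgn (h true) := sgn_not _

lemma zA (h : Bool → Bool) :
    sgn (opA h false) + Complex.I * sgn (opA h true)
      = -Complex.I * (sgn (h false) + Complex.I * sgn (h true)) := by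
  cases hf : h false <;> cases ht : h true <;>
    simp [opA, sgn, hf, ht] <;> ring_nf <;> simp [Complex.I_sq] <;> ring

lemma zB (h : Bool → Bool) :
    sgn (opB h false) + Complex.I * sgn (opB h true)
      = Complex.I * (sgn (h false) + Complex.I * sgn (h true)) := by
  cases hf : h false <;> cases ht : h true <;>
    simp [opB, sgn, hf, ht] <;> ring_nf <;> simp [Complex.I_sq] <;> ring

lemma aux (n : ℕ) (x x' : Fin n → Bool)
    (hx : Even (Finset.univ.filter (fun i => x i = true)).card)
    (hx' : Even (Finset.univ.filter (fun i => x' i = true)).card) :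
    (Finset.univ.filter (fun f : Fin n → Bool → Bool =>
        (∏ i, (sgn (f i false) + Complex.I * sgn (f i true))).re = 2 ^ (n / 2) ∧
        ∏ i, sgn (f i (x i)) =
          (-1 : ℂ) ^ ((Finset.univ.filter (fun i => x i = true)).card / 2))).card ≤
    (Finset.univ.filter (fun f : Fin n → Bool → Bool =>
        (∏ i, (sgn (f i false) + Complex.I * sgn (f i true))).re = 2 ^ (n / 2) ∧
        ∏ i, sgn (f i (x' i)) =
          (-1 : ℂ) ^ ((Finset.univ.filter (fun i => x' i = true)).card / 2))).card := by
  classical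
  set D : Finset (Fin n) := univ.filter (fun i => x i ≠ x' i) with hD
  obtain ⟨A, hAsub, hAcard⟩ := Finset.exists_subset_card_eq (s := D) (n := D.card / 2) (Nat.div_le_self _ _)
  have hAD : ∀ i, i ∈ A → i ∈ D := fun i hi => hAsub hi
  -- cardinal bookkeeping
  have hk2 : D.card + 2 * (univ.filter (fun i => x i = true ∧ x' i = true)).card
      = (univ.filter (fun i => x i = true)).card + (univ.filter (fun i => x' i = true)).card := by
    simp only [hD, Finset.card_filter, Finset.mul_sum, ← Finset.sum_add_distrib]
    refine Finset.sum_congr rfl fun i _ => ?_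
    cases h1 : x i <;> cases h2 : x' i <;> simp [h1, h2]
  set M : Finset (Fin n) :=
    univ.filter (fun i => i ∈ D ∧ ((i ∈ A ∧ x i = false) ∨ (i ∉ A ∧ x i = true))) with hM
  have hMcard : M.card + (univ.filter (fun i => i ∈ A ∧ x i = true)).card
      = (univ.filter (fun i => i ∈ A ∧ x i = false)).card
        + (univ.filter (fun i => i ∈ D ∧ x i = true)).card := by
    simp only [hM, Finset.card_filter, ← Finset.sum_add_distrib]
    refine Finset.sum_congr rfl fun i _ => ?_
    by_cases hiD : i ∈ D
    · by_cases hiA : i ∈ A <;> cases h1 : x i <;> simp [hiD, hiA, h1]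
    · have hiA : i ∉ A := fun h => hiD (hAD i h)
      simp [hiD, hiA]
  have hAsplit : (univ.filter (fun i => i ∈ A ∧ x i = false)).card
      + (univ.filter (fun i => i ∈ A ∧ x i = true)).card = A.card := by
    have h0 : A.card = (univ.filter (fun i => i ∈ A)).card := by
      congr 1; ext i; simp
    rw [h0]
    simp only [Finset.card_filter, ← Finset.sum_add_distrib]
    refine Finset.sum_congr rfl fun i _ => ?_
    by_cases hiA : i ∈ A <;> cases h1 : x i <;> simp [hiA, h1]
  have hDsplit : (univ.filter (fun i => i ∈ D ∧ x i = false)).card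
      + (univ.filter (fun i => i ∈ D ∧ x i = true)).card = D.card := by
    have h0 : D.card = (univ.filter (fun i => i ∈ D)).card := by
      congr 1; ext i; simp
    rw [h0]
    simp only [Finset.card_filter, ← Finset.sum_add_distrib]
    refine Finset.sum_congr rfl fun i _ => ?_
    by_cases hiD : i ∈ D <;> cases h1 : x i <;> simp [hiD, h1]
  have hx4 : (univ.filter (fun i => x' i = true)).card
        + (univ.filter (fun i => i ∈ D ∧ x i = true)).card
      = (univ.filter (fun i => x i = true)).card
        + (univ.filter (fun i => i ∈ D ∧ x i = false)).card := by
    simp only [Finset.card_filter, ← Finset.sum_add_distrib]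
    refine Finset.sum_congr rfl fun i _ => ?_
    by_cases hiD : i ∈ D
    · have hne : x i ≠ x' i := by simpa [hD] using hiD
      cases h1 : x i <;> cases h2 : x' i <;> simp_all
    · have heq : x i = x' i := by
        by_contra hne; exact hiD (by simp [hD, hne])
      cases h1 : x i <;> simp [hiD, ← heq, h1]
  have hxe : (univ.filter (fun i => x i = true)).card % 2 = 0 := Nat.even_iff.mp hx
  have hx'e : (univ.filter (fun i => x' i = true)).card % 2 = 0 := Nat.even_iff.mp hx'
  have hparity : (M.card + (univ.filter (fun i => x i = true)).card / 2) % 2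
      = ((univ.filter (fun i => x' i = true)).card / 2) % 2 := by omega
  have hDeven : D.card % 2 = 0 := by omega
  -- the injection
  set F : (Fin n → Bool → Bool) → (Fin n → Bool → Bool) :=
    fun f i => if i ∈ D then (if i ∈ A then opA (f i) else opB (f i)) else f i with hF
  apply Finset.card_le_card_of_injOn F
  · -- maps into the target set
    intro f hf
    rw [Finset.mem_coe, Finset.mem_filter] at hf ⊢
    obtain ⟨-, hprod1, hprod2⟩ := hf
    refine ⟨Finset.mem_univ _, ?_, ?_⟩
    · -- the product of z's is literally preserved
      have step : ∀ i : Fin n,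
          sgn (F f i false) + Complex.I * sgn (F f i true)
            = (if i ∈ D then (if i ∈ A then -Complex.I else Complex.I) else 1)
              * (sgn (f i false) + Complex.I * sgn (f i true)) := by
        intro i
        simp only [hF]
        split_ifs with hiD hiA
        · exact zA (f i)
        · exact zB (f i)
        · rw [one_mul]
      have hp : ∏ i, (sgn (F f i false) + Complex.I * sgn (F f i true))
          = (∏ i, (if i ∈ D then (if i ∈ A then -Complex.I else Complex.I) else 1))
            * ∏ i, (sgn (f i false) + Complex.I * sgn (f i true)) := by
        rw [← Finset.prod_mul_distrib]
        exact Finset.prod_congr rfl fun i _ => step i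
      have hone : (∏ i, (if i ∈ D then (if i ∈ A then -Complex.I else Complex.I) else 1)) = 1 := by
        rw [Finset.prod_ite_mem, Finset.univ_inter]
        rw [← Finset.union_sdiff_of_subset hAsub, Finset.prod_union Finset.disjoint_sdiff]
        have e1 : ∏ i ∈ A, (if i ∈ A then -Complex.I else Complex.I) = (-Complex.I) ^ A.card := by
          rw [Finset.prod_congr rfl fun i hi => if_pos hi, Finset.prod_const]
        have e2 : ∏ i ∈ D \ A, (if i ∈ A then -Complex.I else Complex.I)
            = Complex.I ^ (D \ A).card := by
          rw [Finset.prod_congr rfl fun i hi => if_neg (Finset.mem_sdiff.mp hi).2,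
            Finset.prod_const]
        rw [e1, e2, Finset.card_sdiff_of_subset hAsub, hAcard]
        have h3 : D.card - D.card / 2 = D.card / 2 := by omega
        rw [h3, ← mul_pow]
        norm_num [Complex.I_mul_I]
      rw [hp, hone, one_mul, hprod1]
    · -- the appropriateness sign condition
      have stepb : ∀ i : Fin n,
          sgn (F f i (x' i)) = (if i ∈ M then -1 else 1) * sgn (f i (x i)) := by
        intro i
        by_cases hiD : i ∈ D
        · have hne : x i ≠ x' i := by simpa [hD] using hiD
          have hx'i : x' i = !(x i) := by
            cases hxx : x i <;> cases hxx' : x' i <;> simp_all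
          simp only [hF]
          rw [if_pos hiD]
          by_cases hiA : i ∈ A
          · rw [if_pos hiA]
            cases h1 : x i
            · have hiM : i ∈ M :=
                Finset.mem_filter.mpr ⟨Finset.mem_univ _, hiD, Or.inl ⟨hiA, h1⟩⟩
              rw [hx'i, h1, Bool.not_false, if_pos hiM, sgnA_true, neg_one_mul]
            · have hiM : i ∉ M := by
                intro hc
                rcases (Finset.mem_filter.mp hc).2.2 with ⟨-, hxf⟩ | ⟨hnA, -⟩
                · rw [h1] at hxf; exact Bool.noConfusion hxf
                · exact hnA hiA
              rw [hx'i, h1, Bool.not_true, if_neg hiM, sgnA_false, one_mul]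
          · rw [if_neg hiA]
            cases h1 : x i
            · have hiM : i ∉ M := by
                intro hc
                rcases (Finset.mem_filter.mp hc).2.2 with ⟨hA', -⟩ | ⟨-, hxt⟩
                · exact hiA hA'
                · rw [h1] at hxt; exact Bool.noConfusion hxt
              rw [hx'i, h1, Bool.not_false, if_neg hiM, sgnB_true, one_mul]
            · have hiM : i ∈ M :=
                Finset.mem_filter.mpr ⟨Finset.mem_univ _, hiD, Or.inr ⟨hiA, h1⟩⟩
              rw [hx'i, h1, Bool.not_true, if_pos hiM, sgnB_false, neg_one_mul]
        · have heq : x i = x' i := by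
            by_contra hc; exact hiD (by simp [hD, hc])
          have hiM : i ∉ M := by simp [hM, hiD]
          simp only [hF]
          rw [if_neg hiD, if_neg hiM, ← heq, one_mul]
      have hp : ∏ i, sgn (F f i (x' i))
          = (∏ i, (if i ∈ M then (-1 : ℂ) else 1)) * ∏ i, sgn (f i (x i)) := by
        rw [← Finset.prod_mul_distrib]
        exact Finset.prod_congr rfl fun i _ => stepb i
      have hMprod : (∏ i, (if i ∈ M then (-1 : ℂ) else 1)) = (-1) ^ M.card := by
        rw [Finset.prod_ite_mem, Finset.univ_inter, Finset.prod_const]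
      rw [hp, hMprod, hprod2, ← pow_add, neg_one_pow_eq_pow_mod_two, hparity,
        ← neg_one_pow_eq_pow_mod_two]
  · -- injectivity via explicit left inverse
    intro f _ g _ hfg
    set G : (Fin n → Bool → Bool) → (Fin n → Bool → Bool) :=
      fun f i => if i ∈ D then (if i ∈ A then opB (f i) else opA (f i)) else f i with hG
    have hGF : ∀ f, G (F f) = f := by
      intro f
      funext i b
      simp only [hF, hG]
      split_ifs with hiD hiA
      · rw [opB_opA]
      · show opA (opB (f i)) b = f i b
        cases hfb : f i false <;> cases hft : f i true <;> cases b <;>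
          simp [opA, opB, hfb, hft]
      · rfl
    calc f = G (F f) := (hGF f).symm
      _ = G (F g) := by rw [hfg]
      _ = g := hGF g

end OptBal

theorem optimal_strategies_balanced (n : ℕ) (hn : 3 ≤ n)
    (x x' : Fin n → Bool)
    (hx : Even (Finset.univ.filter (fun i => x i = true)).card)
    (hx' : Even (Finset.univ.filter (fun i => x' i = true)).card) :
    (Finset.univ.filter (fun f : Fin n → Bool → Bool =>
        (∏ i, (sgn (f i false) + Complex.I * sgn (f i true))).re = 2 ^ (n / 2) ∧
        ∏ i, sgn (f i (x i)) =
          (-1 : ℂ) ^ ((Finset.univ.filter (fun i => x i = true)).card / 2))).card =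
    (Finset.univ.filter (fun f : Fin n → Bool → Bool =>
        (∏ i, (sgn (f i false) + Complex.I * sgn (f i true))).re = 2 ^ (n / 2) ∧
        ∏ i, sgn (f i (x' i)) =
          (-1 : ℂ) ^ ((Finset.univ.filter (fun i => x' i = true)).card / 2))).card :=
  le_antisymm (OptBal.aux n x x' hx hx') (OptBal.aux n x' x hx' hx)
end

section
/- Any classical deterministic error-free strategy for game G_n (n ≥ 3) provides an appropriate answer on at most two legitimate questions; on all other legitimate questions at least one player outputs the abstain symbol ⊥. -/
/-!
Write `ε t = score f t (!x t) - score f t (x t)` for the change of player `t`'s score when its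
input bit is flipped; it is odd in `ZMod 4`. If `x` is legitimate and answered, and players
`p ≠ q` also answer the flipped bit, then flipping both bits gives another legitimate answered
question, so `ε p + ε q = 0`. Three such players `i, j, k` would force `2 ε j = 0`, which is
impossible; so at most two players of `x` answer the flipped bit. On the other hand, two distinct
legitimate questions differ in an even, hence at least two, number of positions, and if `x, y, z`
are all answered, the positions where `y` or `z` differs from `x` are at least three players
answering the flipped bit of `x`.
-/

open Finset

section FlipOn

variable {ι : Type*} [DecidableEq ι]

def flipOn (x : ι → Bool) (s : Finset ι) : ι → Bool := fun t => if t ∈ s then !x t else x t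

variable [Fintype ι]

lemma eq_flipOn_filter_ne (x y : ι → Bool) : y = flipOn x {t | x t ≠ y t} := by
  funext t
  simp only [flipOn, mem_filter, mem_univ, true_and]
  cases x t <;> cases y t <;> simp

lemma filter_ne_injective (x : ι → Bool) :
    Function.Injective fun y : ι → Bool => ({t | x t ≠ y t} : Finset ι) := by
  intro y z h
  rw [eq_flipOn_filter_ne x y, eq_flipOn_filter_ne x z]
  exact congrArg (flipOn x) h

lemma sum_flipOn {G : Type*} [AddCommGroup G] (g : ι → Bool → G) (x : ι → Bool)
    (s : Finset ι) :
    ∑ t, g t (flipOn x s t) = ∑ t, g t (x t) + ∑ t ∈ s, (g t (!x t) - g t (x t)) := by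
  have hterm : ∀ t, g t (flipOn x s t) =
      g t (x t) + if t ∈ s then g t (!x t) - g t (x t) else 0 := by
    intro t
    unfold flipOn
    split_ifs <;> abel
  simp only [hterm, sum_add_distrib, Fintype.sum_ite_mem]

lemma natCast_card_flipOn_true (x : ι → Bool) (s : Finset ι) :
    (#{t | flipOn x s t = true} : ZMod 2) = #{t | x t = true} + #s := by
  simp only [natCast_card_filter, sum_flipOn (fun _ b => if b = true then (1 : ZMod 2) else 0)]
  congr 1
  rw [card_eq_sum_ones, Nat.cast_sum]
  refine sum_congr rfl fun t _ => ?_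
  cases x t <;> decide

lemma even_card_flipOn_true {x : ι → Bool} {s : Finset ι} (hx : Even #{t | x t = true})
    (hs : Even #s) : Even #{t | flipOn x s t = true} := by
  rw [← ZMod.natCast_eq_zero_iff_even] at *
  rw [natCast_card_flipOn_true, hx, hs, add_zero]

lemma even_card_ne {x y : ι → Bool} (hx : Even #{t | x t = true}) (hy : Even #{t | y t = true}) :
    Even #{t | x t ≠ y t} := by
  rw [← ZMod.natCast_eq_zero_iff_even] at *
  rwa [eq_flipOn_filter_ne x y, natCast_card_flipOn_true, hx, zero_add] at hy

lemma two_le_card_ne {x y : ι → Bool} (hx : Even #{t | x t = true}) (hy : Even #{t | y t = true})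
    (hxy : x ≠ y) : 2 ≤ #{t | x t ≠ y t} := by
  obtain ⟨t, ht⟩ := Function.ne_iff.mp hxy
  have hpos : 0 < #{t | x t ≠ y t} := card_pos.mpr ⟨t, by simpa using ht⟩
  obtain ⟨k, hk⟩ := even_card_ne hx hy
  omega

end FlipOn

lemma Finset.two_lt_card_union {α : Type*} [DecidableEq α] {s t : Finset α} (hst : s ≠ t)
    (hs : 2 ≤ #s) (ht : 2 ≤ #t) : 2 < #(s ∪ t) := by
  by_contra! h
  exact hst <| (eq_of_subset_of_card_le (subset_union_left : s ⊆ s ∪ t) (by omega)).trans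
    (eq_of_subset_of_card_le (subset_union_right : t ⊆ s ∪ t) (by omega)).symm

section Strategy

variable {ι : Type*}

/-- A question `x` with `#{t | x t}` even is answered appropriately iff
`∑ t, score f t (x t) = 0`, since for even `m` the condition `m / 2 ≡ a (mod 2)` is
`m ≡ 2 a (mod 4)`. -/
def score (f : ι → Bool → Option Bool) (t : ι) (b : Bool) : ZMod 4 :=
  (if b = true then 1 else 0) - 2 * if f t b = some true then 1 else 0

lemma two_mul_score_not_sub_score (f : ι → Bool → Option Bool) (t : ι) (b : Bool) :
    2 * (score f t (!b) - score f t b) = 2 := by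
  unfold score
  cases b <;> simp only [Bool.not_true, Bool.not_false, Bool.false_eq_true, reduceIte] <;>
    split_ifs <;> decide

variable [Fintype ι]

def IsErrorFree (f : ι → Bool → Option Bool) : Prop :=
  ∀ x : ι → Bool, Even #{t | x t = true} → (∀ t, (f t (x t)).isSome) →
    #{t | f t (x t) = some true} % 2 = #{t | x t = true} / 2 % 2

variable {f : ι → Bool → Option Bool}

lemma IsErrorFree.sum_score_eq_zero (hf : IsErrorFree f) {x : ι → Bool}
    (hx : Even #{t | x t = true}) (hxf : ∀ t, (f t (x t)).isSome) :
    ∑ t, score f t (x t) = 0 := by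
  have h := hf x hx hxf
  obtain ⟨k, hk⟩ := hx
  simp only [score, sum_sub_distrib, ← mul_sum, sum_boole]
  rw [sub_eq_zero, ← Nat.cast_two, ← Nat.cast_mul, ZMod.natCast_eq_natCast_iff']
  omega

variable [DecidableEq ι]

lemma IsErrorFree.score_flip_add_score_flip (hf : IsErrorFree f) {x : ι → Bool}
    (hx : Even #{t | x t = true}) (hxf : ∀ t, (f t (x t)).isSome) {p q : ι} (hpq : p ≠ q)
    (hp : (f p (!x p)).isSome) (hq : (f q (!x q)).isSome) :
    (score f p (!x p) - score f p (x p)) + (score f q (!x q) - score f q (x q)) = 0 := by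
  have hyf : ∀ t, (f t (flipOn x {p, q} t)).isSome := by
    intro t
    unfold flipOn
    split_ifs with ht
    · rcases mem_insert.mp ht with rfl | ht
      · exact hp
      · rwa [mem_singleton.mp ht]
    · exact hxf t
  have hy := hf.sum_score_eq_zero (even_card_flipOn_true hx (by simp [card_pair hpq])) hyf
  rwa [sum_flipOn, hf.sum_score_eq_zero hx hxf, zero_add, sum_pair hpq] at hy

lemma IsErrorFree.card_flippable_le_two (hf : IsErrorFree f) {x : ι → Bool}
    (hx : Even #{t | x t = true}) (hxf : ∀ t, (f t (x t)).isSome) :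
    #{t | (f t (!x t)).isSome} ≤ 2 := by
  by_contra! h
  obtain ⟨i, hi, j, hj, k, hk, hij, hik, hjk⟩ := two_lt_card.mp h
  simp only [mem_filter, mem_univ, true_and] at hi hj hk
  set ε := fun t => score f t (!x t) - score f t (x t)
  have hεij : ε i + ε j = 0 := hf.score_flip_add_score_flip hx hxf hij hi hj
  have hεik : ε i + ε k = 0 := hf.score_flip_add_score_flip hx hxf hik hi hk
  have hεjk : ε j + ε k = 0 := hf.score_flip_add_score_flip hx hxf hjk hj hk
  have h20 : (2 : ZMod 4) = 0 := calc
    2 = 2 * ε j := (two_mul_score_not_sub_score f j (x j)).symm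
    _ = (ε i + ε j) + (ε j + ε k) - (ε i + ε k) := by ring
    _ = 0 := by rw [hεij, hεik, hεjk]; ring
  exact absurd h20 (by decide)

end Strategy

theorem error_free_strategy_at_most_two_general (n : ℕ)
    (f : Fin n → Bool → Option Bool)
    (herr : ∀ x : Fin n → Bool,
      Even (Finset.univ.filter (fun i => x i = true)).card →
      (∀ i, (f i (x i)).isSome) →
      (Finset.univ.filter (fun i => f i (x i) = some true)).card % 2 =
        ((Finset.univ.filter (fun i => x i = true)).card / 2) % 2) :
    (Finset.univ.filter (fun x : Fin n → Bool =>
        Even (Finset.univ.filter (fun i => x i = true)).card ∧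
        ∀ i, (f i (x i)).isSome)).card ≤ 2 := by
  by_contra! h
  obtain ⟨x, hx, y, hy, z, hz, hxy, hxz, hyz⟩ := two_lt_card.mp h
  simp only [mem_filter, mem_univ, true_and] at hx hy hz
  have hf : IsErrorFree f := herr
  have hne := (filter_ne_injective x).ne hyz
  have hflippable : ∀ {w : Fin n → Bool}, (∀ t, (f t (w t)).isSome) →
      ({t | x t ≠ w t} : Finset _) ⊆ ({t | (f t (!x t)).isSome} : Finset _) := by
    intro w hw t ht
    rw [mem_filter] at ht ⊢
    exact ⟨mem_univ t, Bool.eq_not_iff.mpr (Ne.symm ht.2) ▸ hw t⟩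
  exact lt_irrefl 2 <|
    (two_lt_card_union hne (two_le_card_ne hx.1 hy.1 hxy) (two_le_card_ne hx.1 hz.1 hxz)).trans_le
      ((card_le_card (union_subset (hflippable hy.2) (hflippable hz.2))).trans
        (hf.card_flippable_le_two hx.1 hx.2))

theorem error_free_strategy_at_most_two (n : ℕ) (hn : 3 ≤ n)
    (f : Fin n → Bool → Option Bool)
    (herr : ∀ x : Fin n → Bool,
      Even (Finset.univ.filter (fun i => x i = true)).card →
      (∀ i, (f i (x i)).isSome) →
      (Finset.univ.filter (fun i => f i (x i) = some true)).card % 2 =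
        ((Finset.univ.filter (fun i => x i = true)).card / 2) % 2) :
    (Finset.univ.filter (fun x : Fin n → Bool =>
        Even (Finset.univ.filter (fun i => x i = true)).card ∧
        ∀ i, (f i (x i)).isSome)).card ≤ 2 :=
  error_free_strategy_at_most_two_general n f herr
end
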